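/- arXiv:math/9810051 — 2 statements merged into one kernel-verified Lean document; each statement's English description precedes it below -/
import Mathlib

section
/- If v is a partial isometry in the block upper triangular algebra T_2 ⊗ M_n (2×2 block upper triangular complex matrices with n×n blocks), written in block form as [[v_1, v_2],[0, v_3]], and both v*v and vv* are block diagonal (belong to the algebra), then v_1, v_2, and v_3 are each partial isometries. -/
open Matrix

/-- If v = [[v₁, v₂],[0, v₃]] is a partial isometry in T₂ ⊗ Mₙ and both
v*v and vv* are block diagonal, then v₁, v₂, v₃ are partial isometries. -/
theorem stmt6 (n : ℕ) (v1 v2 v3 : Matrix (Fin n) (Fin n) ℂ)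
    (V : Matrix (Fin n ⊕ Fin n) (Fin n ⊕ Fin n) ℂ)
    (hV : V = Matrix.fromBlocks v1 v2 0 v3)
    (hpi : V * Vᴴ * V = V)
    (hinit : ∃ a c : Matrix (Fin n) (Fin n) ℂ, Vᴴ * V = Matrix.fromBlocks a 0 0 c)
    (hfin : ∃ a c : Matrix (Fin n) (Fin n) ℂ, V * Vᴴ = Matrix.fromBlocks a 0 0 c) :
    v1 * v1ᴴ * v1 = v1 ∧ v2 * v2ᴴ * v2 = v2 ∧ v3 * v3ᴴ * v3 = v3 := by
  obtain ⟨a, c, ha⟩ := hinit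
  obtain ⟨a', c', hb⟩ := hfin
  subst hV
  rw [fromBlocks_conjTranspose, fromBlocks_multiply] at ha hb
  have h12 : v1ᴴ * v2 = 0 := by
    have := congrArg Matrix.toBlocks₁₂ ha
    simpa [toBlocks_fromBlocks₁₂] using this
  have h21 : v2ᴴ * v1 = 0 := by
    have := congrArg Matrix.toBlocks₂₁ ha
    simpa [toBlocks_fromBlocks₂₁] using this
  have h23 : v2 * v3ᴴ = 0 := by
    have := congrArg Matrix.toBlocks₁₂ hb
    simpa [toBlocks_fromBlocks₁₂] using this
  have h32 : v3 * v2ᴴ = 0 := by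
    have := congrArg Matrix.toBlocks₂₁ hb
    simpa [toBlocks_fromBlocks₂₁] using this
  rw [fromBlocks_conjTranspose, fromBlocks_multiply, fromBlocks_multiply] at hpi
  have h11 := congrArg Matrix.toBlocks₁₁ hpi
  have htr := congrArg Matrix.toBlocks₁₂ hpi
  have h22 := congrArg Matrix.toBlocks₂₂ hpi
  simp only [toBlocks_fromBlocks₁₁, toBlocks_fromBlocks₁₂, toBlocks_fromBlocks₂₂,
    conjTranspose_zero, Matrix.mul_zero, Matrix.zero_mul, add_zero, zero_add,
    add_mul, mul_assoc, h12, h21, h23, h32] at h11 htr h22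
  -- inspect
  refine ⟨?_, ?_, ?_⟩ <;> rw [mul_assoc]
  · exact h11
  · exact htr
  · exact h22
end

section
/- For n ≥ 3 there are uncountably many equivalence classes of partial isometries in T_3(ℂ) of the form [[0, v_1, v_2],[0, v_4, v_3],[0,0,0]] where the 2×2 matrix [[v_1,v_2],[v_4,v_3]] is unitary, under the equivalence v ~ w iff w = z v y for unitaries z, y in T_3(ℂ). More precisely: there exists an injection from ℝ (or from the unit circle modulo a countable relation) into the set of these equivalence classes. -/
open Matrix

/-- The partial isometry in T₃(ℂ) with first column zero, last row zero,
and upper-right 2×2 corner the unitary U. -/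
def V7 (U : Matrix (Fin 2) (Fin 2) ℂ) : Matrix (Fin 3) (Fin 3) ℂ :=
  !![0, U 0 0, U 0 1;
     0, U 1 0, U 1 1;
     0, 0, 0]

/-!
A unitary upper triangular matrix is diagonal, since its inverse (its adjoint) is both upper and
lower triangular. Multiplying on both sides by diagonal unitaries only rotates the phases of the
entries, so `‖V7 U 0 1‖ = ‖U 0 0‖` is an invariant of the class of `V7 U`. The rotations by the
angles `arctan (exp s) ∈ (0, π/2)` have pairwise distinct `|cos|`, hence lie in distinct classes.
-/

namespace Matrix

theorem BlockTriangular.isDiag_of_mem_unitaryGroup {n R : Type*} [Fintype n] [LinearOrder n]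
    [CommRing R] [StarRing R] {A : Matrix n n R} (hA : A ∈ unitaryGroup n R)
    (hT : BlockTriangular A id) : A.IsDiag := by
  let := invertibleOfLeftInverse A (star A) hA.1
  have hT_star : BlockTriangular (star A) id :=
    inv_eq_left_inv hA.1 ▸ blockTriangular_inv_of_blockTriangular hT
  intro i j hij
  rcases hij.lt_or_gt with h | h
  · simpa [star_apply] using congrArg star (hT_star h)
  · exact hT h

variable {𝕜 : Type*} [RCLike 𝕜]

theorem IsDiag.norm_apply_self_of_mem_unitaryGroup {n : Type*} [Fintype n] [DecidableEq n]
    {A : Matrix n n 𝕜} (hD : A.IsDiag) (hA : A ∈ unitaryGroup n 𝕜) (i : n) : ‖A i i‖ = 1 := by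
  obtain ⟨d, rfl⟩ : ∃ d, A = diagonal d := ⟨_, hD.diagonal_diag.symm⟩
  have h := congrFun (congrFun hA.1 i) i
  rw [star_eq_conjTranspose, diagonal_conjTranspose, diagonal_mul_diagonal, diagonal_apply_eq,
    one_apply_eq, Pi.star_apply, RCLike.star_def, RCLike.conj_mul] at h
  rw [diagonal_apply_eq]
  exact (pow_eq_one_iff_of_nonneg (norm_nonneg _) two_ne_zero).1 (by exact_mod_cast h)

theorem IsDiag.norm_mul_mul_apply {m n : Type*} [Fintype m] [DecidableEq m] [Fintype n]
    [DecidableEq n] {D : Matrix m m 𝕜} {E : Matrix n n 𝕜} (hD : D.IsDiag)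
    (hDu : D ∈ unitaryGroup m 𝕜) (hE : E.IsDiag) (hEu : E ∈ unitaryGroup n 𝕜)
    (A : Matrix m n 𝕜) (i : m) (j : n) : ‖(D * A * E) i j‖ = ‖A i j‖ := by
  have hDi := hD.norm_apply_self_of_mem_unitaryGroup hDu i
  have hEj := hE.norm_apply_self_of_mem_unitaryGroup hEu j
  obtain ⟨d, rfl⟩ : ∃ d, D = diagonal d := ⟨_, hD.diagonal_diag.symm⟩
  obtain ⟨e, rfl⟩ : ∃ e, E = diagonal e := ⟨_, hE.diagonal_diag.symm⟩
  rw [diagonal_apply_eq] at hDi hEj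
  rw [mul_diagonal, diagonal_mul, norm_mul, norm_mul, hDi, hEj, one_mul, mul_one]

end Matrix

noncomputable def rotationMatrix (θ : ℝ) : Matrix (Fin 2) (Fin 2) ℂ :=
  !![Real.cos θ, -Real.sin θ; Real.sin θ, Real.cos θ]

theorem rotationMatrix_mem_unitaryGroup (θ : ℝ) : rotationMatrix θ ∈ unitaryGroup (Fin 2) ℂ := by
  have h : (Real.cos θ : ℂ) ^ 2 + (Real.sin θ : ℂ) ^ 2 = 1 := by
    exact_mod_cast Real.cos_sq_add_sin_sq θ
  rw [mem_unitaryGroup_iff', rotationMatrix, star_eq_conjTranspose]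
  ext i j
  fin_cases i <;> fin_cases j <;>
    simp [mul_apply, Fin.sum_univ_two, conjTranspose_apply, -Complex.ofReal_cos,
      -Complex.ofReal_sin] <;>
    first | ring1 | linear_combination h

theorem injective_norm_cos_arctan_exp :
    Function.Injective fun s : ℝ => ‖(Real.cos (Real.arctan (Real.exp s)) : ℂ)‖ := by
  intro s t h
  simp only [Complex.norm_real, Real.norm_eq_abs, abs_of_pos (Real.cos_arctan_pos _)] at h
  have mem_Icc (x : ℝ) : Real.arctan (Real.exp x) ∈ Set.Icc 0 Real.pi :=
    ⟨Real.arctan_nonneg.2 (Real.exp_pos x).le,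
      (Real.arctan_lt_pi_div_two _).le.trans (by linarith [Real.pi_pos])⟩
  exact Real.exp_injective (Real.arctan_injective (Real.injOn_cos (mem_Icc s) (mem_Icc t) h))

/-- There are uncountably many equivalence classes of such partial isometries
under two-sided multiplication by (upper triangular) unitaries of T₃(ℂ):
there is an injection of ℝ into the classes. -/
theorem stmt7 :
    ∃ f : ℝ → Matrix (Fin 2) (Fin 2) ℂ,
      (∀ s, f s ∈ Matrix.unitaryGroup (Fin 2) ℂ) ∧
      ∀ s t : ℝ, s ≠ t →
        ¬ ∃ z y : Matrix (Fin 3) (Fin 3) ℂ,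
            z ∈ Matrix.unitaryGroup (Fin 3) ℂ ∧ y ∈ Matrix.unitaryGroup (Fin 3) ℂ ∧
            (∀ i j : Fin 3, j < i → z i j = 0) ∧
            (∀ i j : Fin 3, j < i → y i j = 0) ∧
            z * V7 (f s) * y = V7 (f t) := by
  refine ⟨fun s => rotationMatrix (Real.arctan (Real.exp s)),
    fun s => rotationMatrix_mem_unitaryGroup _, ?_⟩
  rintro s t hst ⟨z, y, hz, hy, hz_triu, hy_triu, h⟩
  have hz_diag := BlockTriangular.isDiag_of_mem_unitaryGroup hz fun i j => hz_triu i j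
  have hy_diag := BlockTriangular.isDiag_of_mem_unitaryGroup hy fun i j => hy_triu i j
  have key := hz_diag.norm_mul_mul_apply hz hy_diag hy
    (V7 (rotationMatrix (Real.arctan (Real.exp s)))) 0 1
  rw [h] at key
  exact hst (injective_norm_cos_arctan_exp key.symm)
end
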